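/- For all integers g ≥ 2 and p ≥ 2, the staircase with landing E_{g,p,1} is brodable but not strongly brodable. -/

import Mathlib

/-- Two vertices of `ℤ²` are adjacent if their Euclidean distance is `1`. -/
def Adj (u v : ℤ × ℤ) : Prop := (u.1 - v.1) ^ 2 + (u.2 - v.2) ^ 2 = 1

/-- The inferior diagonal of the cell `(a, b)`: the unordered pair `{(a,b), (a+1,b+1)}`. -/
def infDiag (c : ℤ × ℤ) : Sym2 (ℤ × ℤ) := s(c, (c.1 + 1, c.2 + 1))

/-- The superior diagonal of the cell `(a, b)`: the unordered pair `{(a,b+1), (a+1,b)}`. -/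
def supDiag (c : ℤ × ℤ) : Sym2 (ℤ × ℤ) := s((c.1, c.2 + 1), (c.1 + 1, c.2))

/-- The unordered pair underlying an ordered pair of vertices. -/
def diagOf (e : (ℤ × ℤ) × (ℤ × ℤ)) : Sym2 (ℤ × ℤ) := s(e.1, e.2)

/-- `d 0, d 1, …, d (2n - 1)` (with `n = C.card`) is an embroidery of the
configuration `C`. -/
def IsEmbroidery (C : Finset (ℤ × ℤ)) (d : ℕ → (ℤ × ℤ) × (ℤ × ℤ)) : Prop :=
  (∀ i < 2 * C.card, ∃ c ∈ C, diagOf (d i) = infDiag c ∨ diagOf (d i) = supDiag c) ∧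
  (∀ c ∈ C, ∃! i, i < 2 * C.card ∧ diagOf (d i) = infDiag c) ∧
  (∀ c ∈ C, ∃! i, i < 2 * C.card ∧ diagOf (d i) = supDiag c) ∧
  (∀ c ∈ C, ∀ i j, i < 2 * C.card → j < 2 * C.card →
    diagOf (d i) = infDiag c → diagOf (d j) = supDiag c → i < j) ∧
  (∀ i, i + 1 < 2 * C.card → Adj (d i).2 (d (i + 1)).1)

/-- A closed embroidery: moreover the end of the last diagonal is adjacent to the
start of the first one. -/
def IsClosedEmbroidery (C : Finset (ℤ × ℤ)) (d : ℕ → (ℤ × ℤ) × (ℤ × ℤ)) : Prop :=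
  IsEmbroidery C d ∧ Adj (d (2 * C.card - 1)).2 (d 0).1

/-- A configuration is brodable if it admits an embroidery. -/
def Brodable (C : Finset (ℤ × ℤ)) : Prop := ∃ d, IsEmbroidery C d

/-- A configuration is strongly brodable if it admits a closed embroidery. -/
def StronglyBrodable (C : Finset (ℤ × ℤ)) : Prop := ∃ d, IsClosedEmbroidery C d

/-- The staircase with landing `E_{g,p,d}`:
`{(i, −i) : 0 ≤ i ≤ g−1} ∪ {(g−1+j, −g) : 1 ≤ j ≤ p} ∪ {(g+p+k−1, −g−k) : 1 ≤ k ≤ d}`. -/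
def stairLanding (g p d : ℕ) : Finset (ℤ × ℤ) :=
  (Finset.range g).image (fun i : ℕ => ((i : ℤ), -(i : ℤ))) ∪
  (Finset.range p).image (fun j : ℕ => ((g : ℤ) + j, -(g : ℤ))) ∪
  (Finset.range d).image (fun k : ℕ => ((g : ℤ) + p + k, -(g : ℤ) - 1 - k))

/-!
An embroidery: climb the staircase cell by cell (inferior, then superior diagonal), run along the
landing on inferior diagonals, turn round the last cell and come back along the landing on superior
diagonals.

No closed embroidery: cyclically consecutive diagonals of a closed embroidery have adjacent
endpoints, and at the foot of the staircase this leaves no choice. The inferior diagonal of `(0,0)`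
can only neighbour the superior diagonals of `(0,0)` and `(1,-1)`, the superior diagonal of `(0,0)`
only the inferior diagonals of `(0,0)` and `(1,-1)`, and the inferior diagonal of `(1,-1)` only the
superior diagonals of `(0,0)`, `(1,-1)` and `(2,-2)`. So five diagonals are forced to be consecutive
on the cycle, and wherever the cycle is cut open some superior diagonal comes before the inferior
diagonal of its cell.
-/

lemma adj_iff {u v : ℤ × ℤ} : Adj u v ↔
    u.1 = v.1 ∧ (u.2 = v.2 + 1 ∨ v.2 = u.2 + 1) ∨ u.2 = v.2 ∧ (u.1 = v.1 + 1 ∨ v.1 = u.1 + 1) := by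
  unfold Adj
  constructor
  · intro h
    generalize hx : u.1 - v.1 = x at h
    generalize hy : u.2 - v.2 = y at h
    have : -1 ≤ x ∧ x ≤ 1 ∧ -1 ≤ y ∧ y ≤ 1 := by
      refine ⟨?_, ?_, ?_, ?_⟩ <;> nlinarith [sq_nonneg x, sq_nonneg y]
    obtain ⟨hx₁, hx₂, hy₁, hy₂⟩ := this
    interval_cases x <;> interval_cases y <;> omega
  · rintro (⟨h₁, h₂ | h₂⟩ | ⟨h₁, h₂ | h₂⟩) <;> rw [h₁, h₂] <;> ring

lemma Adj.symm {u v : ℤ × ℤ} (h : Adj u v) : Adj v u := by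
  unfold Adj at *
  linarith

lemma infDiag_injective : Function.Injective infDiag := by
  rintro ⟨a, b⟩ ⟨a', b'⟩ h
  simp only [infDiag, Sym2.eq_iff, Prod.mk.injEq] at h ⊢
  omega

lemma supDiag_injective : Function.Injective supDiag := by
  rintro ⟨a, b⟩ ⟨a', b'⟩ h
  simp only [supDiag, Sym2.eq_iff, Prod.mk.injEq] at h ⊢
  omega

lemma infDiag_ne_supDiag (c c' : ℤ × ℤ) : infDiag c ≠ supDiag c' := by
  obtain ⟨a, b⟩ := c
  obtain ⟨a', b'⟩ := c'
  simp only [infDiag, supDiag, ne_eq, Sym2.eq_iff, Prod.mk.injEq]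
  omega

def IsDiagonal (C : Finset (ℤ × ℤ)) (D : Sym2 (ℤ × ℤ)) : Prop :=
  ∃ c ∈ C, D = infDiag c ∨ D = supDiag c

lemma card_image_infDiag_union_image_supDiag (C : Finset (ℤ × ℤ)) :
    (C.image infDiag ∪ C.image supDiag).card = 2 * C.card := by
  rw [Finset.card_union_of_disjoint, Finset.card_image_of_injective _ infDiag_injective,
    Finset.card_image_of_injective _ supDiag_injective, two_mul]
  simp only [Finset.disjoint_left, Finset.mem_image]
  rintro _ ⟨c, -, rfl⟩ ⟨c', -, h⟩
  exact infDiag_ne_supDiag c c' h.symm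

/-- Counting: positions `0, …, 2 * C.card - 1` map onto the `2 * C.card` diagonals of `C`, hence
injectively, so every diagonal occurs exactly once. -/
lemma isEmbroidery_of_covers {C : Finset (ℤ × ℤ)} {d : ℕ → (ℤ × ℤ) × (ℤ × ℤ)}
    (hdiag : ∀ i < 2 * C.card, IsDiagonal C (diagOf (d i)))
    (hcover : ∀ c ∈ C, ∃ i j, i < j ∧ j < 2 * C.card ∧
      diagOf (d i) = infDiag c ∧ diagOf (d j) = supDiag c)
    (hadj : ∀ i, i + 1 < 2 * C.card → Adj (d i).2 (d (i + 1)).1) :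
    IsEmbroidery C d := by
  have hinj : Set.InjOn (fun i ↦ diagOf (d i)) (Finset.range (2 * C.card)) := by
    refine Finset.injOn_of_surjOn_of_card_le _ (t := C.image infDiag ∪ C.image supDiag) ?_ ?_
      (by rw [card_image_infDiag_union_image_supDiag, Finset.card_range])
    · intro i hi
      obtain ⟨c, hc, h | h⟩ := hdiag i (Finset.mem_range.mp hi) <;>
        simp only [Finset.coe_union, Finset.coe_image, h]
      exacts [Or.inl ⟨c, hc, rfl⟩, Or.inr ⟨c, hc, rfl⟩]
    · intro D hD
      simp only [Finset.coe_union, Finset.coe_image, Set.mem_union, Set.mem_image,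
        Finset.mem_coe] at hD
      obtain ⟨c, hc, rfl⟩ | ⟨c, hc, rfl⟩ := hD <;>
        obtain ⟨i, j, hij, hj, hi, hj'⟩ := hcover c hc
      · exact ⟨i, Finset.mem_range.mpr (by omega), hi⟩
      · exact ⟨j, Finset.mem_range.mpr hj, hj'⟩
  have hunique {i j : ℕ} (hi : i < 2 * C.card) (hj : j < 2 * C.card)
      (h : diagOf (d i) = diagOf (d j)) : i = j :=
    hinj (Finset.mem_range.mpr hi) (Finset.mem_range.mpr hj) h
  refine ⟨hdiag, fun c hc ↦ ?_, fun c hc ↦ ?_, fun c hc i j hi hj hi' hj' ↦ ?_, hadj⟩ <;>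
    obtain ⟨i₀, j₀, hij₀, hj₀, hi₀, hj₀'⟩ := hcover c hc
  · exact ⟨i₀, ⟨by omega, hi₀⟩, fun i ⟨hi, h⟩ ↦ hunique hi (by omega) (h.trans hi₀.symm)⟩
  · exact ⟨j₀, ⟨hj₀, hj₀'⟩, fun j ⟨hj, h⟩ ↦ hunique hj hj₀ (h.trans hj₀'.symm)⟩
  · rwa [hunique hi (by omega) (hi'.trans hi₀.symm), hunique hj hj₀ (hj'.trans hj₀'.symm)]

def Linked (D D' : Sym2 (ℤ × ℤ)) : Prop := ∃ u ∈ D, ∃ v ∈ D', Adj u v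

lemma Linked.symm {D D' : Sym2 (ℤ × ℤ)} (h : Linked D D') : Linked D' D :=
  let ⟨u, hu, v, hv, huv⟩ := h
  ⟨v, hv, u, hu, huv.symm⟩

def CyclicAdj (N i j : ℕ) : Prop :=
  j = i + 1 ∨ i = j + 1 ∨ (i = 0 ∧ j + 1 = N) ∨ (j = 0 ∧ i + 1 = N)

lemma IsClosedEmbroidery.linked {C : Finset (ℤ × ℤ)} {d : ℕ → (ℤ × ℤ) × (ℤ × ℤ)}
    (hd : IsClosedEmbroidery C d) {i j : ℕ} (hi : i < 2 * C.card) (hj : j < 2 * C.card)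
    (hij : CyclicAdj (2 * C.card) i j) : Linked (diagOf (d i)) (diagOf (d j)) := by
  have hstep {i j : ℕ} (h : Adj (d i).2 (d j).1) : Linked (diagOf (d i)) (diagOf (d j)) :=
    ⟨_, Sym2.mem_mk_right _ _, _, Sym2.mem_mk_left _ _, h⟩
  obtain ⟨⟨-, -, -, -, hadj⟩, hclose⟩ := hd
  rcases hij with rfl | rfl | ⟨rfl, hj'⟩ | ⟨rfl, hi'⟩
  · exact hstep (hadj i hj)
  · exact (hstep (hadj j hi)).symm
  · rw [← Nat.eq_sub_of_add_eq hj'] at hclose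
    exact (hstep hclose).symm
  · rw [← Nat.eq_sub_of_add_eq hi'] at hclose
    exact hstep hclose

lemma succ_and_pred_of_forall_cyclicAdj {N i : ℕ} {P : ℕ → Prop} (hi : i < N)
    (h : ∀ j < N, CyclicAdj N i j → P j) :
    P (if i + 1 = N then 0 else i + 1) ∧ P (if i = 0 then N - 1 else i - 1) := by
  refine ⟨h _ ?_ ?_, h _ ?_ ?_⟩ <;> (try unfold CyclicAdj) <;> split_ifs <;> omega

/-- The hypotheses force `e, a, b, c, h` to be consecutive on the cycle `0, 1, …, N - 1`, in one
direction or the other (`N ≥ 5` rules out the cycle `e, a, b, c`). Wherever this cycle is cut open,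
`b` comes before `a`, or `e` before `c`, or `h` before every other position. -/
lemma false_of_cyclic_neighbours {N a b c e f h : ℕ} (hN : 5 ≤ N) (hb : b < N) (he : e < N)
    (hh : h < N) (hab : a < b) (hce : c < e) (hfh : f < h) (hfa : f ≠ a) (hfb : f ≠ b)
    (hfc : f ≠ c)
    (na : ∀ j < N, CyclicAdj N a j → j = b ∨ j = e)
    (nb : ∀ j < N, CyclicAdj N b j → j = a ∨ j = c)
    (nc : ∀ j < N, CyclicAdj N c j → j = b ∨ j = e ∨ j = h) : False := by
  have := succ_and_pred_of_forall_cyclicAdj (by omega) na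
  have := succ_and_pred_of_forall_cyclicAdj (by omega) nb
  have := succ_and_pred_of_forall_cyclicAdj (by omega) nc
  split_ifs at * <;> omega

section StairLanding

variable {g p d : ℕ}

lemma mem_stairLanding {c : ℤ × ℤ} : c ∈ stairLanding g p d ↔
    (∃ i < g, c = ((i : ℤ), -(i : ℤ))) ∨ (∃ j < p, c = ((g : ℤ) + j, -(g : ℤ))) ∨
    ∃ k < d, c = ((g : ℤ) + p + k, -(g : ℤ) - 1 - k) := by
  simp [stairLanding, eq_comm]

lemma stair_mem_stairLanding {i : ℕ} (hi : i < g) :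
    ((i : ℤ), -(i : ℤ)) ∈ stairLanding g p d :=
  mem_stairLanding.mpr (Or.inl ⟨i, hi, rfl⟩)

lemma landing_mem_stairLanding {j : ℕ} (hj : j < p) :
    ((g : ℤ) + j, -(g : ℤ)) ∈ stairLanding g p d :=
  mem_stairLanding.mpr (Or.inr (Or.inl ⟨j, hj, rfl⟩))

lemma tail_mem_stairLanding {k : ℕ} (hk : k < d) :
    ((g : ℤ) + p + k, -(g : ℤ) - 1 - k) ∈ stairLanding g p d :=
  mem_stairLanding.mpr (Or.inr (Or.inr ⟨k, hk, rfl⟩))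

lemma card_stairLanding : (stairLanding g p d).card = g + p + d := by
  rw [stairLanding, Finset.card_union_of_disjoint, Finset.card_union_of_disjoint,
    Finset.card_image_of_injective, Finset.card_image_of_injective,
    Finset.card_image_of_injective] <;>
    simp [Function.Injective, Finset.disjoint_left] <;> omega

end StairLanding

def infStitch (c : ℤ × ℤ) : (ℤ × ℤ) × (ℤ × ℤ) := (c, (c.1 + 1, c.2 + 1))

def supStitch (c : ℤ × ℤ) : (ℤ × ℤ) × (ℤ × ℤ) := ((c.1, c.2 + 1), (c.1 + 1, c.2))

lemma diagOf_infStitch (c : ℤ × ℤ) : diagOf (infStitch c) = infDiag c := rfl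

lemma diagOf_supStitch (c : ℤ × ℤ) : diagOf (supStitch c) = supDiag c := rfl

lemma diagOf_swap (e : (ℤ × ℤ) × (ℤ × ℤ)) : diagOf e.swap = diagOf e := Sym2.eq_swap

def stairLandingStitches (g p i : ℕ) : (ℤ × ℤ) × (ℤ × ℤ) :=
  if i < 2 * g then
    (if i % 2 = 0 then infStitch else supStitch) ((i / 2 : ℕ), -((i / 2 : ℕ) : ℤ))
  else if i < 2 * g + p then infStitch ((g : ℤ) + (i - 2 * g : ℕ), -(g : ℤ))
  else if i = 2 * g + p then supStitch ((g : ℤ) + (p - 1 : ℕ), -(g : ℤ))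
  else if i = 2 * g + p + 1 then (infStitch ((g : ℤ) + p, -(g : ℤ) - 1)).swap
  else if i = 2 * g + p + 2 then (supStitch ((g : ℤ) + p, -(g : ℤ) - 1)).swap
  else (supStitch ((g : ℤ) + (2 * g + 2 * p + 1 - i : ℕ), -(g : ℤ))).swap

lemma stairLandingStitches_adj {g p i : ℕ} (hp : 1 ≤ p) (hi : i + 1 < 2 * (g + p + 1)) :
    Adj (stairLandingStitches g p i).2 (stairLandingStitches g p (i + 1)).1 := by
  rw [adj_iff]
  unfold stairLandingStitches infStitch supStitch
  split_ifs <;> dsimp only [Prod.swap] <;> omega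

theorem brodable_stairLanding {g p : ℕ} (hp : 1 ≤ p) : Brodable (stairLanding g p 1) := by
  have hcorner : ((g : ℤ) + p, -(g : ℤ) - 1) ∈ stairLanding g p 1 := by
    simpa using tail_mem_stairLanding (g := g) (p := p) zero_lt_one
  refine ⟨stairLandingStitches g p, isEmbroidery_of_covers ?_ ?_ ?_⟩ <;>
    simp only [card_stairLanding]
  · intro i hi
    unfold stairLandingStitches
    split_ifs
    · exact ⟨_, stair_mem_stairLanding (by omega), Or.inl rfl⟩
    · exact ⟨_, stair_mem_stairLanding (by omega), Or.inr rfl⟩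
    · exact ⟨_, landing_mem_stairLanding (by omega), Or.inl rfl⟩
    · exact ⟨_, landing_mem_stairLanding (by omega), Or.inr rfl⟩
    · exact ⟨_, hcorner, Or.inl (diagOf_swap _)⟩
    · exact ⟨_, hcorner, Or.inr (diagOf_swap _)⟩
    · exact ⟨_, landing_mem_stairLanding (by omega), Or.inr (diagOf_swap _)⟩
  · intro c hc
    obtain ⟨i, hi, rfl⟩ | ⟨j, hj, rfl⟩ | ⟨k, hk, rfl⟩ := mem_stairLanding.mp hc
    on_goal 2 => obtain hj' | hj' := Nat.lt_or_ge (j + 1) p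
    on_goal 1 => refine ⟨2 * i, 2 * i + 1, ?_⟩
    on_goal 2 => refine ⟨2 * g + j, 2 * g + 2 * p + 1 - j, ?_⟩
    on_goal 3 => refine ⟨2 * g + j, 2 * g + p, ?_⟩
    on_goal 4 => refine ⟨2 * g + p + 1, 2 * g + p + 2, ?_⟩
    all_goals
      refine ⟨by omega, by omega, ?_, ?_⟩ <;> unfold stairLandingStitches <;> split_ifs <;>
        first
        | omega
        | simp only [diagOf_swap, diagOf_infStitch, diagOf_supStitch]
          congr 1
          ext <;> push_cast <;> omega
  · exact fun i hi ↦ stairLandingStitches_adj hp hi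

section Neighbours

variable {g p d : ℕ} {D : Sym2 (ℤ × ℤ)}

lemma eq_of_linked_infDiag_zero (hg : 2 ≤ g) (hD : IsDiagonal (stairLanding g p d) D)
    (h : Linked (infDiag (0, 0)) D) : D = supDiag (0, 0) ∨ D = supDiag (1, -1) := by
  obtain ⟨⟨u₁, u₂⟩, hu, ⟨v₁, v₂⟩, hv, huv⟩ := h
  obtain ⟨⟨c₁, c₂⟩, hc, rfl | rfl⟩ := hD <;>
    simp only [infDiag_ne_supDiag, supDiag_injective.eq_iff, or_self, Prod.mk.injEq] <;>
    simp only [infDiag, supDiag, Sym2.mem_iff, adj_iff, Prod.mk.injEq] at hu hv huv <;>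
    obtain ⟨i, hi, hc⟩ | ⟨j, hj, hc⟩ | ⟨k, hk, hc⟩ := mem_stairLanding.mp hc <;>
    simp only [Prod.mk.injEq] at hc <;> omega

lemma eq_of_linked_supDiag_zero (hg : 2 ≤ g) (hD : IsDiagonal (stairLanding g p d) D)
    (h : Linked (supDiag (0, 0)) D) : D = infDiag (0, 0) ∨ D = infDiag (1, -1) := by
  obtain ⟨⟨u₁, u₂⟩, hu, ⟨v₁, v₂⟩, hv, huv⟩ := h
  obtain ⟨⟨c₁, c₂⟩, hc, rfl | rfl⟩ := hD <;>
    simp only [(infDiag_ne_supDiag _ _).symm, infDiag_injective.eq_iff, or_self,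
      Prod.mk.injEq] <;>
    simp only [infDiag, supDiag, Sym2.mem_iff, adj_iff, Prod.mk.injEq] at hu hv huv <;>
    obtain ⟨i, hi, hc⟩ | ⟨j, hj, hc⟩ | ⟨k, hk, hc⟩ := mem_stairLanding.mp hc <;>
    simp only [Prod.mk.injEq] at hc <;> omega

lemma eq_of_linked_infDiag_one (hg : 2 ≤ g) (hD : IsDiagonal (stairLanding g p d) D)
    (h : Linked (infDiag (1, -1)) D) :
    D = supDiag (0, 0) ∨ D = supDiag (1, -1) ∨ D = supDiag (2, -2) := by
  obtain ⟨⟨u₁, u₂⟩, hu, ⟨v₁, v₂⟩, hv, huv⟩ := h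
  obtain ⟨⟨c₁, c₂⟩, hc, rfl | rfl⟩ := hD <;>
    simp only [infDiag_ne_supDiag, supDiag_injective.eq_iff, or_self, Prod.mk.injEq] <;>
    simp only [infDiag, supDiag, Sym2.mem_iff, adj_iff, Prod.mk.injEq] at hu hv huv <;>
    obtain ⟨i, hi, hc⟩ | ⟨j, hj, hc⟩ | ⟨k, hk, hc⟩ := mem_stairLanding.mp hc <;>
    simp only [Prod.mk.injEq] at hc <;> omega

end Neighbours

theorem not_stronglyBrodable_stairLanding {g p d : ℕ} (hg : 2 ≤ g) (hp : 1 ≤ p) :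
    ¬ StronglyBrodable (stairLanding g p d) := by
  rintro ⟨s, hs⟩
  obtain ⟨⟨hdiag, hinf, hsup, hord, -⟩, -⟩ := id hs
  have hN : 5 ≤ 2 * (stairLanding g p d).card := by rw [card_stairLanding]; omega
  have mem₀ : ((0 : ℤ), (0 : ℤ)) ∈ stairLanding g p d := by
    simpa using stair_mem_stairLanding (p := p) (d := d) (i := 0) (by omega)
  have mem₁ : ((1 : ℤ), (-1 : ℤ)) ∈ stairLanding g p d := by
    simpa using stair_mem_stairLanding (p := p) (d := d) (i := 1) (by omega)
  have mem₂ : ((2 : ℤ), (-2 : ℤ)) ∈ stairLanding g p d := by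
    rcases Nat.lt_or_ge 2 g with hg' | hg'
    · simpa using stair_mem_stairLanding (p := p) (d := d) hg'
    · simpa [show g = 2 by omega] using landing_mem_stairLanding (g := g) (d := d) hp
  obtain ⟨a, ⟨ha, hsa⟩, ha_uniq⟩ := hinf _ mem₀
  obtain ⟨b, ⟨hb, hsb⟩, hb_uniq⟩ := hsup _ mem₀
  obtain ⟨c, ⟨hc, hsc⟩, hc_uniq⟩ := hinf _ mem₁
  obtain ⟨e, ⟨he, hse⟩, he_uniq⟩ := hsup _ mem₁
  obtain ⟨f, ⟨hf, hsf⟩, -⟩ := hinf _ mem₂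
  obtain ⟨h, ⟨hh, hsh⟩, hh_uniq⟩ := hsup _ mem₂
  have hne {i j : ℕ} (hij : diagOf (s i) ≠ diagOf (s j)) : i ≠ j := fun h ↦ hij (h ▸ rfl)
  refine false_of_cyclic_neighbours hN hb he hh (hord _ mem₀ _ _ ha hb hsa hsb)
    (hord _ mem₁ _ _ hc he hsc hse) (hord _ mem₂ _ _ hf hh hsf hsh) ?_ ?_ ?_ ?_ ?_ ?_
  · exact hne (by rw [hsf, hsa]; exact infDiag_injective.ne (by decide))
  · exact hne (by rw [hsf, hsb]; exact infDiag_ne_supDiag _ _)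
  · exact hne (by rw [hsf, hsc]; exact infDiag_injective.ne (by decide))
  · intro j hj hadj
    rcases eq_of_linked_infDiag_zero hg (hdiag j hj) (hsa ▸ hs.linked ha hj hadj) with h' | h'
    exacts [Or.inl (hb_uniq j ⟨hj, h'⟩), Or.inr (he_uniq j ⟨hj, h'⟩)]
  · intro j hj hadj
    rcases eq_of_linked_supDiag_zero hg (hdiag j hj) (hsb ▸ hs.linked hb hj hadj) with h' | h'
    exacts [Or.inl (ha_uniq j ⟨hj, h'⟩), Or.inr (hc_uniq j ⟨hj, h'⟩)]
  · intro j hj hadj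
    rcases eq_of_linked_infDiag_one hg (hdiag j hj) (hsc ▸ hs.linked hc hj hadj) with h' | h' | h'
    exacts [Or.inl (hb_uniq j ⟨hj, h'⟩), Or.inr (Or.inl (he_uniq j ⟨hj, h'⟩)),
      Or.inr (Or.inr (hh_uniq j ⟨hj, h'⟩))]

/-- For `g ≥ 2` and `p ≥ 2`, the staircase with landing `E_{g,p,1}` is brodable but
not strongly brodable. -/
theorem stairLanding_g_p_one (g p : ℕ) (hg : 2 ≤ g) (hp : 2 ≤ p) :
    Brodable (stairLanding g p 1) ∧ ¬ StronglyBrodable (stairLanding g p 1) :=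
  ⟨brodable_stairLanding (by omega), not_stronglyBrodable_stairLanding hg (by omega)⟩
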